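/- arXiv:0904.0843 — 5 statements merged into one kernel-verified Lean document; each statement's English description precedes it below -/
import Mathlib

section
/- Let n ≥ 1 and a₁,…,aₙ ∈ ℝ, write ā = n⁻¹ Σᵢ aᵢ, and assume Σᵢ (aᵢ − ā)² > 0. Then the minimum of Σᵢ (n pᵢ − 1)² over all vectors p = (p₁,…,pₙ) ∈ ℝⁿ satisfying Σᵢ pᵢ = 1 and Σᵢ pᵢ aᵢ = 0 is attained and equals (Σᵢ aᵢ)² / Σᵢ (aᵢ − ā)². -/
/-!
Substituting `qᵢ = n pᵢ - 1` and `bᵢ = aᵢ - ā` turns the two constraints into `Σ qᵢ = 0` and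
`Σ qᵢ bᵢ = -Σ aᵢ`. By Cauchy–Schwarz, `(Σ aᵢ)² = (Σ qᵢ bᵢ)² ≤ Σ qᵢ² · Σ bᵢ²`, with equality
for `q` proportional to `b`; since `Σ bᵢ = 0`, that multiple of `b` also satisfies `Σ qᵢ = 0`.
-/

open Finset

section

variable {ι : Type*} [Fintype ι]

lemma sum_sub_sum_div_card_eq_zero (a : ι → ℝ) : ∑ i, (a i - (∑ j, a j) / Fintype.card ι) = 0 := by
  rcases isEmpty_or_nonempty ι with _ | _
  · simp
  · rw [sum_sub_distrib, sum_const, card_univ, nsmul_eq_mul,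
      mul_div_cancel₀ _ (by positivity), sub_self]

lemma sum_mul_sub_const_of_sum_eq_zero {q : ι → ℝ} (hq : ∑ i, q i = 0) (a : ι → ℝ) (m : ℝ) :
    ∑ i, q i * (a i - m) = ∑ i, q i * a i := by
  simp only [mul_sub, sum_sub_distrib, ← sum_mul, hq, zero_mul, sub_zero]

lemma isLeast_sum_sq_of_sum_mul_eq {b : ι → ℝ} (hb : ∑ i, b i = 0) (hbb : 0 < ∑ i, b i ^ 2)
    (c : ℝ) :
    IsLeast {v | ∃ q : ι → ℝ, ∑ i, q i = 0 ∧ ∑ i, q i * b i = c ∧ v = ∑ i, q i ^ 2}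
      (c ^ 2 / ∑ i, b i ^ 2) := by
  constructor
  · refine ⟨fun i => c / (∑ i, b i ^ 2) * b i, by rw [← mul_sum, hb, mul_zero], ?_, ?_⟩
    · simp only [mul_assoc, ← mul_sum, ← sq]
      field_simp
    · simp only [mul_pow, ← mul_sum]
      field_simp
  · rintro _ ⟨q, -, rfl, rfl⟩
    rw [div_le_iff₀ hbb]
    exact sum_mul_sq_le_sq_mul_sq _ _ _

lemma setOf_sum_sq_card_mul_sub_one_eq_setOf_sum_sq [Nonempty ι] (a : ι → ℝ) (m : ℝ) :
    {v : ℝ | ∃ p : ι → ℝ, ∑ i, p i = 1 ∧ ∑ i, p i * a i = 0 ∧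
        v = ∑ i, ((Fintype.card ι : ℝ) * p i - 1) ^ 2} =
      {v | ∃ q : ι → ℝ, ∑ i, q i = 0 ∧ ∑ i, q i * (a i - m) = -∑ i, a i ∧
        v = ∑ i, q i ^ 2} := by
  set n : ℝ := (Fintype.card ι : ℝ)
  have hn : n ≠ 0 := by positivity
  ext v
  constructor
  · rintro ⟨p, hp, hpa, rfl⟩
    have hq : ∑ i, (n * p i - 1) = 0 := by
      simp [sum_sub_distrib, ← mul_sum, hp, n]
    refine ⟨fun i => n * p i - 1, hq, ?_, rfl⟩
    rw [sum_mul_sub_const_of_sum_eq_zero hq]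
    simp only [sub_mul, mul_assoc, one_mul, sum_sub_distrib, ← mul_sum, hpa, mul_zero, zero_sub]
  · rintro ⟨q, hq, hqa, rfl⟩
    rw [sum_mul_sub_const_of_sum_eq_zero hq] at hqa
    refine ⟨fun i => (q i + 1) / n, ?_, ?_, ?_⟩
    · rw [← sum_div, sum_add_distrib, hq]
      simp [n, hn]
    · simp only [div_mul_eq_mul_div, ← sum_div, add_mul, one_mul, sum_add_distrib, hqa]
      simp
    · congr 1 with i
      field_simp
      ring

end

theorem stmt_0_general (n : ℕ) (a : Fin n → ℝ)
    (abar : ℝ) (habar : abar = (∑ i, a i) / n)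
    (hvar : 0 < ∑ i, (a i - abar) ^ 2) :
    IsLeast
      {v : ℝ | ∃ p : Fin n → ℝ, (∑ i, p i) = 1 ∧ (∑ i, p i * a i) = 0 ∧
        v = ∑ i, ((n : ℝ) * p i - 1) ^ 2}
      ((∑ i, a i) ^ 2 / ∑ i, (a i - abar) ^ 2) := by
  obtain rfl | hn := eq_or_ne n 0
  · simp at hvar
  have hcard : Fintype.card (Fin n) = n := Fintype.card_fin n
  have hb : ∑ i, (a i - abar) = 0 := by
    simpa [habar, hcard] using sum_sub_sum_div_card_eq_zero a
  have : NeZero n := ⟨hn⟩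
  have hset := setOf_sum_sq_card_mul_sub_one_eq_setOf_sum_sq a abar
  rw [hcard] at hset
  rw [hset, ← neg_sq]
  exact isLeast_sum_sq_of_sum_mul_eq hb hvar _

theorem stmt_0 (n : ℕ) (hn : 1 ≤ n) (a : Fin n → ℝ)
    (abar : ℝ) (habar : abar = (∑ i, a i) / n)
    (hvar : 0 < ∑ i, (a i - abar) ^ 2) :
    IsLeast
      {v : ℝ | ∃ p : Fin n → ℝ, (∑ i, p i) = 1 ∧ (∑ i, p i * a i) = 0 ∧
        v = ∑ i, ((n : ℝ) * p i - 1) ^ 2}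
      ((∑ i, a i) ^ 2 / ∑ i, (a i - abar) ^ 2) :=
  stmt_0_general n a abar habar hvar
end

section
/- Let n ≥ 1 and a₁,…,aₙ ∈ ℝ with minᵢ aᵢ < 0 < maxᵢ aᵢ. Then there exists a unique λ ∈ ℝ such that 1 + λaᵢ > 0 for all i and Σᵢ aᵢ/(1 + λaᵢ) = 0. Moreover the weights pᵢ = 1/(n(1 + λaᵢ)) satisfy pᵢ > 0, Σᵢ pᵢ = 1 and Σᵢ pᵢ aᵢ = 0, and they maximize Πᵢ (n pᵢ) over all (p₁,…,pₙ) with pᵢ ≥ 0, Σᵢ pᵢ = 1 and Σᵢ pᵢ aᵢ = 0; consequently −2 log max{Πᵢ(npᵢ) : pᵢ ≥ 0, Σᵢpᵢ = 1, Σᵢpᵢaᵢ = 0} = 2 Σᵢ log(1 + λaᵢ). -/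
/-!
The function `score a λ = ∑ᵢ aᵢ / (1 + λ aᵢ)` is strictly decreasing on the interval of
multipliers with all `1 + λ aᵢ > 0`, and it is positive near the left end of that interval
and negative near the right end, so it has exactly one zero `λ` there. For any admissible `λ`
and any feasible `p`, the numbers `n pᵢ (1 + λ aᵢ)` are nonnegative with sum `n`, so AM-GM gives
`∏ n pᵢ ≤ ∏ (1 + λ aᵢ)⁻¹`. At the zero of the score the weights `1 / (n (1 + λ aᵢ))` are
feasible and attain this bound.
-/

open Finset

namespace EmpiricalLikelihood

theorem prod_le_one_of_sum_eq_card {ι : Type*} [Fintype ι] (z : ι → ℝ) (hz : ∀ i, 0 ≤ z i)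
    (hsum : ∑ i, z i = Fintype.card ι) : ∏ i, z i ≤ 1 := by
  rcases isEmpty_or_nonempty ι with _ | _
  · simp
  have hcard : (Fintype.card ι : ℝ) ≠ 0 := by positivity
  have hprod : 0 ≤ ∏ i, z i := prod_nonneg fun i _ => hz i
  have amgm := Real.geom_mean_le_arith_mean_weighted univ (fun _ => (Fintype.card ι : ℝ)⁻¹) z
    (fun _ _ => by positivity) (by simp [hcard]) (fun i _ => hz i)
  rw [Real.finsetProd_rpow _ _ (fun i _ => hz i), ← mul_sum, hsum, inv_mul_cancel₀ hcard] at amgm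
  calc ∏ i, z i = ((∏ i, z i) ^ (Fintype.card ι : ℝ)⁻¹) ^ Fintype.card ι :=
        (Real.rpow_inv_natCast_pow hprod Fintype.card_ne_zero).symm
    _ ≤ 1 := pow_le_one₀ (Real.rpow_nonneg hprod _) amgm

theorem one_add_mul_pos_of_mem_Icc {x l₁ l₂ l : ℝ} (h₁ : 0 < 1 + l₁ * x) (h₂ : 0 < 1 + l₂ * x)
    (hl : l ∈ Set.Icc l₁ l₂) : 0 < 1 + l * x := by
  rcases le_total 0 x with hx | hx
  · nlinarith [hl.1]
  · nlinarith [hl.2]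

theorem div_one_add_mul_lt_div_one_add_mul {x l l' : ℝ} (hx : x ≠ 0) (hll' : l < l')
    (hl : 0 < 1 + l * x) (hl' : 0 < 1 + l' * x) : x / (1 + l' * x) < x / (1 + l * x) := by
  rw [div_lt_div_iff₀ hl' hl]
  nlinarith [mul_pos (pow_pos (abs_pos.2 hx) 2) (sub_pos.2 hll'), sq_abs x]

theorem div_one_add_mul_le_div_one_add_mul (x : ℝ) {l l' : ℝ} (hll' : l < l')
    (hl : 0 < 1 + l * x) (hl' : 0 < 1 + l' * x) : x / (1 + l' * x) ≤ x / (1 + l * x) := by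
  rcases eq_or_ne x 0 with rfl | hx
  · simp
  · exact (div_one_add_mul_lt_div_one_add_mul hx hll' hl hl').le

theorem neg_abs_le_div_one_add_mul {x l : ℝ} (hl : l ≤ 0) (h : 0 < 1 + l * x) :
    -|x| ≤ x / (1 + l * x) := by
  rcases le_total 0 x with hx | hx
  · exact (neg_nonpos.2 (abs_nonneg x)).trans (div_nonneg hx h.le)
  · rw [abs_of_nonpos hx, neg_neg, le_div_iff₀ h]
    nlinarith [mul_nonpos_of_nonpos_of_nonneg hl (sq_nonneg x)]

variable {ι : Type*} (a : ι → ℝ)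

def admissibleSet : Set ℝ := {l | ∀ i, 0 < 1 + l * a i}

theorem ordConnected_admissibleSet : (admissibleSet a).OrdConnected :=
  ⟨fun _ h₁ _ h₂ _ hl i => one_add_mul_pos_of_mem_Icc (h₁ i) (h₂ i) hl⟩

theorem mem_admissibleSet_neg {l : ℝ} : l ∈ admissibleSet (-a) ↔ -l ∈ admissibleSet a := by
  simp [admissibleSet]

variable [Fintype ι]

/-- The derivative of the dual objective `λ ↦ ∑ᵢ log (1 + λ aᵢ)`. -/
noncomputable def score (l : ℝ) : ℝ := ∑ i, a i / (1 + l * a i)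

theorem score_neg (l : ℝ) : score (-a) l = -score a (-l) := by
  simp [score, ← sum_neg_distrib, neg_div]

theorem continuousOn_score : ContinuousOn (score a) (admissibleSet a) :=
  continuousOn_finsetSum _ fun i _ =>
    continuousOn_const.div (by fun_prop) fun _ hl => (hl i).ne'

theorem strictAntiOn_score (ha : ∃ i, a i ≠ 0) : StrictAntiOn (score a) (admissibleSet a) := by
  intro l hl l' hl' hll'
  obtain ⟨j, hj⟩ := ha
  exact sum_lt_sum (fun i _ => div_one_add_mul_le_div_one_add_mul (a i) hll' (hl i) (hl' i))
    ⟨j, mem_univ j, div_one_add_mul_lt_div_one_add_mul hj hll' (hl j) (hl' j)⟩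

theorem exists_score_pos (hpos : ∃ i, 0 < a i) : ∃ l ∈ admissibleSet a, 0 < score a l := by
  obtain ⟨j, hj⟩ := hpos
  obtain ⟨i₀, -, hmax⟩ := exists_max_image univ a ⟨j, mem_univ j⟩
  have hM : 0 < a i₀ := hj.trans_le (hmax j (mem_univ j))
  set S := ∑ i, |a i|
  have hMS : a i₀ ≤ S :=
    (le_abs_self _).trans (single_le_sum (fun i _ => abs_nonneg (a i)) (mem_univ i₀))
  -- `1 + l * max a = max a / (S + 1)`, so the maximal term is `S + 1` and each term is `≥ -|aᵢ|`.
  set l := (S + 1)⁻¹ - (a i₀)⁻¹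
  have hl : l ≤ 0 := sub_nonpos.2 (inv_anti₀ hM (by linarith))
  have hlM : 1 + l * a i₀ = a i₀ / (S + 1) := by
    simp only [l, sub_mul, inv_mul_cancel₀ hM.ne']
    ring
  have hadm : l ∈ admissibleSet a := fun i => by
    rcases le_total (a i) 0 with h | h
    · nlinarith
    · nlinarith [hmax i (mem_univ i), div_pos hM (by linarith : 0 < S + 1)]
  refine ⟨l, hadm, ?_⟩
  have hterm : a i₀ / (1 + l * a i₀) = S + 1 := by
    rw [hlM]
    field_simp
  have : S + 1 + |a i₀| ≤ ∑ i, (a i / (1 + l * a i) + |a i|) := by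
    rw [← hterm]
    exact single_le_sum (f := fun i => a i / (1 + l * a i) + |a i|)
      (fun i _ => by linarith [neg_abs_le_div_one_add_mul hl (hadm i)]) (mem_univ i₀)
  rw [sum_add_distrib] at this
  unfold score
  linarith [abs_nonneg (a i₀)]

theorem exists_score_neg (hneg : ∃ i, a i < 0) : ∃ l ∈ admissibleSet a, score a l < 0 := by
  obtain ⟨l, hl, hpos⟩ := exists_score_pos (-a) (by simpa using hneg)
  refine ⟨-l, (mem_admissibleSet_neg a).1 hl, ?_⟩
  simpa [score_neg] using hpos

theorem exists_score_eq_zero (hneg : ∃ i, a i < 0) (hpos : ∃ i, 0 < a i) :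
    ∃ l ∈ admissibleSet a, score a l = 0 := by
  obtain ⟨l₁, hl₁, h₁⟩ := exists_score_neg a hneg
  obtain ⟨l₂, hl₂, h₂⟩ := exists_score_pos a hpos
  exact (ordConnected_admissibleSet a).isPreconnected.intermediate_value hl₁ hl₂
    (continuousOn_score a) ⟨h₁.le, h₂.le⟩

theorem sum_inv_one_add_mul {l : ℝ} (hl : l ∈ admissibleSet a) :
    ∑ i, (1 + l * a i)⁻¹ = Fintype.card ι - l * score a l := by
  have h : ∀ i, (1 + l * a i)⁻¹ = 1 - l * (a i / (1 + l * a i)) := fun i => by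
    field_simp [(hl i).ne']
    ring
  simp only [h, sum_sub_distrib, sum_const, card_univ, nsmul_eq_mul, mul_one, score, mul_sum]

theorem prod_card_mul_le_prod_inv {l : ℝ} (hl : l ∈ admissibleSet a) (p : ι → ℝ)
    (hp : ∀ i, 0 ≤ p i) (hp₁ : ∑ i, p i = 1) (hpa : ∑ i, p i * a i = 0) :
    ∏ i, (Fintype.card ι * p i) ≤ ∏ i, (1 + l * a i)⁻¹ := by
  have hsum : ∑ i, Fintype.card ι * p i * (1 + l * a i) = Fintype.card ι := by
    calc ∑ i, Fintype.card ι * p i * (1 + l * a i)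
        = Fintype.card ι * (∑ i, p i) + Fintype.card ι * l * ∑ i, p i * a i := by
          simp only [mul_sum, ← sum_add_distrib]
          exact sum_congr rfl fun i _ => by ring
      _ = Fintype.card ι := by rw [hp₁, hpa]; ring
  have hz := prod_le_one_of_sum_eq_card _
    (fun i => mul_nonneg (mul_nonneg (Nat.cast_nonneg _) (hp i)) (hl i).le) hsum
  rw [prod_mul_distrib] at hz
  rwa [prod_inv_distrib, ← one_div, le_div_iff₀ (prod_pos fun i _ => hl i)]

theorem sum_one_div_card_mul_eq_one [Nonempty ι] {l : ℝ} (hl : l ∈ admissibleSet a)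
    (h₀ : score a l = 0) : ∑ i, 1 / ((Fintype.card ι : ℝ) * (1 + l * a i)) = 1 := by
  simp_rw [one_div, mul_inv, ← mul_sum, sum_inv_one_add_mul a hl, h₀, mul_zero, sub_zero]
  exact inv_mul_cancel₀ (Nat.cast_ne_zero.2 Fintype.card_ne_zero)

theorem sum_one_div_card_mul_mul_eq_zero {l : ℝ} (h₀ : score a l = 0) :
    ∑ i, 1 / ((Fintype.card ι : ℝ) * (1 + l * a i)) * a i = 0 := by
  have h : ∀ i, 1 / ((Fintype.card ι : ℝ) * (1 + l * a i)) * a i =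
      (Fintype.card ι : ℝ)⁻¹ * (a i / (1 + l * a i)) := fun i => by field_simp
  simp_rw [h, ← mul_sum]
  exact mul_eq_zero_of_right _ h₀

end EmpiricalLikelihood

open EmpiricalLikelihood

theorem stmt_2_general (n : ℕ) (a : Fin n → ℝ)
    (hneg : ∃ i, a i < 0) (hpos : ∃ i, 0 < a i) :
    ∃ lam : ℝ,
      ((∀ i, 0 < 1 + lam * a i) ∧ (∑ i, a i / (1 + lam * a i)) = 0) ∧
      (∀ lam' : ℝ,
        ((∀ i, 0 < 1 + lam' * a i) ∧ (∑ i, a i / (1 + lam' * a i)) = 0) → lam' = lam) ∧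
      (∀ i, 0 < 1 / ((n : ℝ) * (1 + lam * a i))) ∧
      (∑ i, 1 / ((n : ℝ) * (1 + lam * a i))) = 1 ∧
      (∑ i, (1 / ((n : ℝ) * (1 + lam * a i))) * a i) = 0 ∧
      IsGreatest
        {v : ℝ | ∃ p : Fin n → ℝ, (∀ i, 0 ≤ p i) ∧ (∑ i, p i) = 1 ∧
          (∑ i, p i * a i) = 0 ∧ v = ∏ i, ((n : ℝ) * p i)}
        (∏ i, ((n : ℝ) * (1 / ((n : ℝ) * (1 + lam * a i))))) ∧
      (-2 * Real.log (∏ i, ((n : ℝ) * (1 / ((n : ℝ) * (1 + lam * a i))))) =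
        2 * ∑ i, Real.log (1 + lam * a i)) := by
  obtain ⟨lam, hlam, hscore⟩ := exists_score_eq_zero a hneg hpos
  obtain ⟨i₀, -⟩ := hneg
  have : Nonempty (Fin n) := ⟨i₀⟩
  have hn : (0 : ℝ) < n := Nat.cast_pos.2 i₀.pos
  have hweight_pos : ∀ i, 0 < 1 / ((n : ℝ) * (1 + lam * a i)) :=
    fun i => one_div_pos.2 (mul_pos hn (hlam i))
  have hweight_sum := sum_one_div_card_mul_eq_one a hlam hscore
  have hweight_moment := sum_one_div_card_mul_mul_eq_zero a hscore
  rw [Fintype.card_fin] at hweight_sum hweight_moment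
  have hweight : ∀ i, (n : ℝ) * (1 / ((n : ℝ) * (1 + lam * a i))) = (1 + lam * a i)⁻¹ :=
    fun i => by field_simp [(hlam i).ne']
  refine ⟨lam, ⟨hlam, hscore⟩, ?_, hweight_pos, hweight_sum, hweight_moment,
    ⟨⟨_, fun i => (hweight_pos i).le, hweight_sum, hweight_moment, rfl⟩, ?_⟩, ?_⟩
  · rintro l ⟨hl, hl₀⟩
    obtain ⟨i, hi⟩ := hpos
    exact (strictAntiOn_score a ⟨i, hi.ne'⟩).injOn hl hlam (hl₀.trans hscore.symm)
  · rintro v ⟨p, hp, hp₁, hpa, rfl⟩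
    simp_rw [hweight]
    simpa using prod_card_mul_le_prod_inv a hlam p hp hp₁ hpa
  · simp_rw [hweight, Real.log_prod fun i _ => (inv_pos.2 (hlam i)).ne', Real.log_inv,
      sum_neg_distrib]
    ring

theorem stmt_2 (n : ℕ) (hn : 1 ≤ n) (a : Fin n → ℝ)
    (hneg : ∃ i, a i < 0) (hpos : ∃ i, 0 < a i) :
    ∃ lam : ℝ,
      ((∀ i, 0 < 1 + lam * a i) ∧ (∑ i, a i / (1 + lam * a i)) = 0) ∧
      (∀ lam' : ℝ,
        ((∀ i, 0 < 1 + lam' * a i) ∧ (∑ i, a i / (1 + lam' * a i)) = 0) → lam' = lam) ∧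
      (∀ i, 0 < 1 / ((n : ℝ) * (1 + lam * a i))) ∧
      (∑ i, 1 / ((n : ℝ) * (1 + lam * a i))) = 1 ∧
      (∑ i, (1 / ((n : ℝ) * (1 + lam * a i))) * a i) = 0 ∧
      IsGreatest
        {v : ℝ | ∃ p : Fin n → ℝ, (∀ i, 0 ≤ p i) ∧ (∑ i, p i) = 1 ∧
          (∑ i, p i * a i) = 0 ∧ v = ∏ i, ((n : ℝ) * p i)}
        (∏ i, ((n : ℝ) * (1 / ((n : ℝ) * (1 + lam * a i))))) ∧
      (-2 * Real.log (∏ i, ((n : ℝ) * (1 / ((n : ℝ) * (1 + lam * a i))))) =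
        2 * ∑ i, Real.log (1 + lam * a i)) :=
  stmt_2_general n a hneg hpos
end

section
/- Let (H, d) be a pseudometric space, x₀ ∈ H, and X a random element of H on a probability space such that d(X, x₀) is measurable. Define the small ball probability φ(h) = P(d(X, x₀) ≤ h) and assume φ(h) > 0 for every h > 0. Assume there is a function τ : [0,1] → ℝ such that φ(hs)/φ(h) → τ(s) as h → 0⁺, for every s ∈ [0,1]. Let g : [0,1] → ℝ be continuously differentiable. Then, as h → 0⁺, E[g(d(X, x₀)/h) · 1{d(X, x₀) ≤ h}] / φ(h) → g(1) − ∫₀¹ g′(s) τ(s) ds. -/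
/-!
Writing `g u = g 1 - ∫ s in u..1, g' s` and exchanging the order of integration gives the exact
identity `E[g(D/h) 1{D ≤ h}] = g 1 * φ h - ∫ s in 0..1, g' s * φ (h * s)`, where `D = d(X, x₀)`.
After dividing by `φ h`, the ratios `φ (h * s) / φ h` lie in `[0, 1]` because `φ` is monotone,
so dominated convergence gives the limit.
-/

open MeasureTheory Filter Set Topology

theorem intervalIntegral_eq_setIntegral_Icc_indicator_Ici {G : ℝ → ℝ} {a b y : ℝ}
    (hy : y ∈ Icc a b) : ∫ s in y..b, G s = ∫ s in Icc a b, (Ici y).indicator G s := by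
  have hinter : Ici y ∩ Icc a b = Icc y b := by
    ext s
    simp only [mem_inter_iff, mem_Ici, mem_Icc]
    exact ⟨fun h => ⟨h.1, h.2.2⟩, fun h => ⟨h.1, hy.1.trans h.1, h.2⟩⟩
  rw [integral_indicator measurableSet_Ici, Measure.restrict_restrict measurableSet_Ici, hinter,
    intervalIntegral.integral_of_le hy.2, integral_Icc_eq_integral_Ioc]

theorem integral_derivWithin_Icc_eq_sub_of_mem {g : ℝ → ℝ} {a b u : ℝ}
    (hg : ContDiffOn ℝ 1 g (Icc a b)) (hu : u ∈ Icc a b) :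
    ∫ s in u..b, derivWithin g (Icc a b) s = g b - g u := by
  rw [← intervalIntegral.integral_derivWithin_Icc_of_contDiffOn_Icc
      (hg.mono (Icc_subset_Icc hu.1 le_rfl)) hu.2,
    intervalIntegral.integral_of_le hu.2, intervalIntegral.integral_of_le hu.2,
    ← restrict_Ioo_eq_restrict_Ioc]
  refine setIntegral_congr_fun measurableSet_Ioo fun x hx => ?_
  have hx' : x ∈ Ioo a b := ⟨hu.1.trans_lt hx.1, hx.2⟩
  rw [derivWithin_of_mem_nhds (Icc_mem_nhds hx'.1 hx'.2),
    derivWithin_of_mem_nhds (Icc_mem_nhds hx.1 hx.2)]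

theorem ContDiffOn.intervalIntegrable_derivWithin_Icc {g : ℝ → ℝ} {a b : ℝ}
    (hg : ContDiffOn ℝ 1 g (Icc a b)) (hab : a < b) :
    IntervalIntegrable (derivWithin g (Icc a b)) volume a b :=
  (hg.continuousOn_derivWithin (uniqueDiffOn_Icc hab) le_rfl).intervalIntegrable_of_Icc hab.le

section DistributionFunction

variable {Ω : Type*} [MeasurableSpace Ω] (μ : Measure Ω) [IsFiniteMeasure μ] {Y : Ω → ℝ}
  {G : ℝ → ℝ}

theorem integrable_indicator_Ici_prod (hY : Measurable Y) (hG : IntervalIntegrable G volume 0 1) :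
    Integrable (Function.uncurry fun ω s => (Ici (Y ω)).indicator G s)
      (μ.prod (volume.restrict (Icc 0 1))) := by
  have hprod : Integrable (fun p : Ω × ℝ => (1 : ℝ) * G p.2) (μ.prod (volume.restrict (Icc 0 1))) :=
    (integrable_const 1).mul_prod ((intervalIntegrable_iff_integrableOn_Icc_of_le zero_le_one).1 hG)
  refine (hprod.indicator (measurableSet_le (hY.comp measurable_fst) measurable_snd)).congr
    (Eventually.of_forall fun p => ?_)
  simp only [Function.uncurry, Function.comp_apply, indicator_apply, mem_Ici, mem_ofPred_eq, one_mul]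

theorem integrableOn_intervalIntegral_of_le_one (hY : Measurable Y) (hY0 : ∀ ω, 0 ≤ Y ω)
    (hG : IntervalIntegrable G volume 0 1) :
    IntegrableOn (fun ω => ∫ s in Y ω..1, G s) {ω | Y ω ≤ 1} μ := by
  refine (integrable_indicator_Ici_prod (μ.restrict _) hY hG).integral_prod_left.congr ?_
  filter_upwards [ae_restrict_mem (hY measurableSet_Iic)] with ω hω
  exact (intervalIntegral_eq_setIntegral_Icc_indicator_Ici ⟨hY0 ω, hω⟩).symm

theorem setIntegral_intervalIntegral_eq_intervalIntegral_mul_measureReal (hY : Measurable Y)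
    (hY0 : ∀ ω, 0 ≤ Y ω) (hG : IntervalIntegrable G volume 0 1) :
    ∫ ω in {ω | Y ω ≤ 1}, (∫ s in Y ω..1, G s) ∂μ = ∫ s in 0..1, G s * μ.real {ω | Y ω ≤ s} := by
  have hmeas : ∀ t, MeasurableSet {ω | Y ω ≤ t} := fun t => hY measurableSet_Iic
  calc ∫ ω in {ω | Y ω ≤ 1}, (∫ s in Y ω..1, G s) ∂μ
      = ∫ ω in {ω | Y ω ≤ 1}, (∫ s in Icc 0 1, (Ici (Y ω)).indicator G s) ∂μ :=
        setIntegral_congr_fun (hmeas 1) fun ω hω =>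
          intervalIntegral_eq_setIntegral_Icc_indicator_Ici ⟨hY0 ω, hω⟩
    _ = ∫ s in Icc 0 1, ∫ ω in {ω | Y ω ≤ 1}, (Ici (Y ω)).indicator G s ∂μ :=
        integral_integral_swap (integrable_indicator_Ici_prod _ hY hG)
    _ = ∫ s in Icc 0 1, G s * μ.real {ω | Y ω ≤ s} := by
        refine setIntegral_congr_fun measurableSet_Icc fun s hs => ?_
        have hsub : {ω | Y ω ≤ s} ⊆ {ω | Y ω ≤ 1} := fun ω hω => le_trans hω hs.2
        have hfibre :
            (fun ω => (Ici (Y ω)).indicator G s) = {ω | Y ω ≤ s}.indicator fun _ => G s := by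
          ext ω
          simp only [indicator_apply, mem_Ici, mem_ofPred_eq]
        rw [hfibre, integral_indicator_const _ (hmeas s), measureReal_restrict_apply (hmeas s),
          inter_eq_left.2 hsub, smul_eq_mul, mul_comm]
    _ = ∫ s in 0..1, G s * μ.real {ω | Y ω ≤ s} := by
        rw [intervalIntegral.integral_of_le zero_le_one, integral_Icc_eq_integral_Ioc]

theorem setIntegral_comp_eq_sub_intervalIntegral_derivWithin_mul_measureReal (hY : Measurable Y)
    (hY0 : ∀ ω, 0 ≤ Y ω) {g : ℝ → ℝ} (hg : ContDiffOn ℝ 1 g (Icc 0 1)) :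
    ∫ ω in {ω | Y ω ≤ 1}, g (Y ω) ∂μ = g 1 * μ.real {ω | Y ω ≤ 1}
      - ∫ s in 0..1, derivWithin g (Icc 0 1) s * μ.real {ω | Y ω ≤ s} := by
  have hg' := hg.intervalIntegrable_derivWithin_Icc zero_lt_one
  have hA : MeasurableSet {ω | Y ω ≤ 1} := hY measurableSet_Iic
  have hconst : ∫ _ in {ω | Y ω ≤ 1}, g 1 ∂μ = g 1 * μ.real {ω | Y ω ≤ 1} := by
    rw [setIntegral_const, smul_eq_mul, mul_comm]
  rw [← hconst, ← setIntegral_intervalIntegral_eq_intervalIntegral_mul_measureReal μ hY hY0 hg',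
    ← integral_sub (integrable_const _) (integrableOn_intervalIntegral_of_le_one μ hY hY0 hg')]
  refine setIntegral_congr_fun hA fun ω hω => ?_
  rw [integral_derivWithin_Icc_eq_sub_of_mem hg ⟨hY0 ω, hω⟩]
  ring

end DistributionFunction

theorem tendsto_intervalIntegral_mul_div_of_monotone {φ τ G : ℝ → ℝ} (hφ : Monotone φ)
    (hφpos : ∀ h > 0, 0 < φ h)
    (hτ : ∀ s ∈ Ioc (0 : ℝ) 1, Tendsto (fun h => φ (h * s) / φ h) (𝓝[>] 0) (𝓝 (τ s)))
    (hG : IntervalIntegrable G volume 0 1) :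
    Tendsto (fun h => ∫ s in 0..1, G s * (φ (h * s) / φ h)) (𝓝[>] 0)
      (𝓝 (∫ s in 0..1, G s * τ s)) := by
  refine intervalIntegral.tendsto_integral_filter_of_dominated_convergence (fun s => |G s|) ?_ ?_
    hG.abs ?_
  · refine Eventually.of_forall fun h => ?_
    rw [uIoc_of_le zero_le_one]
    exact hG.aestronglyMeasurable.mul
      ((hφ.measurable.comp (measurable_const_mul h)).div_const _).aestronglyMeasurable
  · filter_upwards [self_mem_nhdsWithin] with h (hh : 0 < h)
    refine Eventually.of_forall fun s hs => ?_
    rw [uIoc_of_le zero_le_one] at hs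
    have hratio : |φ (h * s) / φ h| ≤ 1 := by
      rw [abs_of_pos (div_pos (hφpos _ (mul_pos hh hs.1)) (hφpos h hh)), div_le_one (hφpos h hh)]
      exact hφ (mul_le_of_le_one_right hh.le hs.2)
    rw [norm_mul, Real.norm_eq_abs, Real.norm_eq_abs]
    exact mul_le_of_le_one_right (abs_nonneg _) hratio
  · rw [uIoc_of_le zero_le_one]
    exact Eventually.of_forall fun s hs => tendsto_const_nhds.mul (hτ s hs)

theorem stmt_6 {H : Type*} [PseudoMetricSpace H]
    {Ω : Type*} [MeasurableSpace Ω] (P : Measure Ω) [IsProbabilityMeasure P]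
    (x₀ : H) (X : Ω → H) (hd : Measurable fun ω => dist (X ω) x₀)
    (φ : ℝ → ℝ) (hφdef : ∀ h, φ h = (P {ω | dist (X ω) x₀ ≤ h}).toReal)
    (hφpos : ∀ h > (0 : ℝ), 0 < φ h)
    (τ : ℝ → ℝ)
    (hτ : ∀ s ∈ Set.Icc (0 : ℝ) 1,
      Tendsto (fun h => φ (h * s) / φ h) (nhdsWithin 0 (Set.Ioi 0)) (nhds (τ s)))
    (g : ℝ → ℝ) (hg : ContDiffOn ℝ 1 g (Set.Icc 0 1)) :
    Tendsto
      (fun h => (∫ ω in {ω | dist (X ω) x₀ ≤ h}, g (dist (X ω) x₀ / h) ∂P) / φ h)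
      (nhdsWithin 0 (Set.Ioi 0))
      (nhds (g 1 - ∫ s in (0 : ℝ)..1, derivWithin g (Set.Icc 0 1) s * τ s)) := by
  set D : Ω → ℝ := fun ω => dist (X ω) x₀
  have hφD : ∀ t, φ t = P.real {ω | D ω ≤ t} := hφdef
  have hφmono : Monotone φ := fun a b hab => by
    simp only [hφD]
    exact measureReal_mono fun ω (hω : D ω ≤ a) => hω.trans hab
  have hg' := hg.intervalIntegrable_derivWithin_Icc zero_lt_one
  have hnormalized : ∀ᶠ h in 𝓝[>] 0,
      g 1 - ∫ s in 0..1, derivWithin g (Icc 0 1) s * (φ (h * s) / φ h)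
        = (∫ ω in {ω | D ω ≤ h}, g (D ω / h) ∂P) / φ h := by
    filter_upwards [self_mem_nhdsWithin] with h (hh : 0 < h)
    have hscale : ∀ s, {ω | D ω / h ≤ s} = {ω | D ω ≤ h * s} := fun s =>
      ext fun ω => div_le_iff₀' hh
    have key := setIntegral_comp_eq_sub_intervalIntegral_derivWithin_mul_measureReal P
      (hd.div_const h) (fun ω => div_nonneg dist_nonneg hh.le) hg
    simp only [hscale, mul_one, ← hφD] at key
    rw [key, sub_div, mul_div_cancel_right₀ _ (hφpos h hh).ne', ← intervalIntegral.integral_div]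
    simp only [mul_div_assoc]
  exact (tendsto_const_nhds.sub (tendsto_intervalIntegral_mul_div_of_monotone hφmono hφpos
    (fun s hs => hτ s (Ioc_subset_Icc_self hs)) hg')).congr' hnormalized
end

section
/- Let (H, d) be a pseudometric space, x₀ ∈ H, and X a random element of H on a probability space such that d(X, x₀) is measurable. Define φ(h) = P(d(X, x₀) ≤ h), assume φ(h) > 0 for every h > 0, and assume there is τ : [0,1] → ℝ with φ(hs)/φ(h) → τ(s) as h → 0⁺ for every s ∈ [0,1]. Let K : [0,1] → ℝ be continuously differentiable. Then, as h → 0⁺, writing D = d(X, x₀) and 1_h = 1{D ≤ h}: (i) E[K(D/h) 1_h]/φ(h) → M₁ := K(1) − ∫₀¹ K′(s)τ(s) ds; (ii) E[K(D/h)² 1_h]/φ(h) → M₂ := K(1)² − ∫₀¹ (K²)′(s)τ(s) ds; (iii) E[(D/h) K(D/h) 1_h]/φ(h) → M₀ := K(1) − ∫₀¹ (sK(s))′ τ(s) ds. -/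
/-! For `0 < h`, writing `F (D/h) = F 1 - ∫_{D/h}^1 F'` and exchanging the integrals over `ω` and
`s` gives `E[F(D/h) 1{D ≤ h}] = F 1 φ(h) - ∫₀¹ F'(s) φ(hs) ds`. After division by `φ(h)` the ratios
`φ(hs)/φ(h)` lie in `[0, 1]` because `φ` is monotone, so dominated convergence yields the limit
`F 1 - ∫₀¹ F' τ`. The three claims are the cases `F = K`, `K²` and `s ↦ s K(s)`. -/

open MeasureTheory Filter Set Topology

theorem intervalIntegral.integral_derivWithin_Icc_of_contDiffOn_Icc_of_subset {E : Type*}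
    [NormedAddCommGroup E] [NormedSpace ℝ E] [CompleteSpace E] {f : ℝ → E} {a b c d : ℝ}
    (hf : ContDiffOn ℝ 1 f (Icc a b)) (hac : a ≤ c) (hcd : c ≤ d) (hdb : d ≤ b) :
    ∫ x in c..d, derivWithin f (Icc a b) x = f d - f c := by
  rw [← integral_deriv_of_contDiffOn_Icc (hf.mono (Icc_subset_Icc hac hdb)) hcd,
    integral_of_le hcd, integral_of_le hcd]
  apply MeasureTheory.integral_congr_ae
  rw [← restrict_Ioo_eq_restrict_Ioc]
  filter_upwards [self_mem_ae_restrict measurableSet_Ioo] with x hx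
  exact derivWithin_of_mem_nhds (Icc_mem_nhds (hac.trans_lt hx.1) (hx.2.trans_le hdb))

theorem integrableOn_derivWithin_Icc_of_contDiffOn_Icc {f : ℝ → ℝ} {a b : ℝ}
    (hf : ContDiffOn ℝ 1 f (Icc a b)) (hab : a < b) :
    IntegrableOn (derivWithin f (Icc a b)) (Icc a b) :=
  (hf.continuousOn_derivWithin (uniqueDiffOn_Icc hab) le_rfl).integrableOn_Icc

theorem setIntegral_Icc_eq_setIntegral_Icc_indicator_Ici {g : ℝ → ℝ} {ν : Measure ℝ}
    {a b y : ℝ} (hay : a ≤ y) :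
    ∫ s in Icc y b, g s ∂ν = ∫ s in Icc a b, (Ici y).indicator g s ∂ν := by
  have hset : Icc a b ∩ Ici y = Icc y b := by
    ext x
    exact ⟨fun ⟨⟨_, hxb⟩, hyx⟩ => ⟨hyx, hxb⟩, fun ⟨hyx, hxb⟩ => ⟨⟨hay.trans hyx, hxb⟩, hyx⟩⟩
  rw [setIntegral_indicator measurableSet_Ici, hset]

section LayerCake

variable {Ω : Type*} [MeasurableSpace Ω] {μ : Measure Ω} {Y : Ω → ℝ} {g : ℝ → ℝ}

theorem integrable_indicator_le_prod [IsFiniteMeasure μ] (hY : Measurable Y) {ν : Measure ℝ}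
    [SFinite ν] (hg : Integrable g ν) :
    Integrable ({p : Ω × ℝ | Y p.1 ≤ p.2}.indicator fun p => g p.2) (μ.prod ν) :=
  (hg.comp_snd μ).indicator (measurableSet_le (hY.comp measurable_fst) measurable_snd)

theorem setIntegral_le_one_eq_sub_setIntegral_derivWithin_mul [IsFiniteMeasure μ]
    (hY : Measurable Y) (hY0 : ∀ ω, 0 ≤ Y ω) {F : ℝ → ℝ} (hF : ContDiffOn ℝ 1 F (Icc 0 1)) :
    ∫ ω in {ω | Y ω ≤ 1}, F (Y ω) ∂μ
      = F 1 * μ.real {ω | Y ω ≤ 1}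
        - ∫ s in Icc 0 1, derivWithin F (Icc 0 1) s * μ.real {ω | Y ω ≤ s} := by
  set S := {ω | Y ω ≤ 1}
  set F' := derivWithin F (Icc 0 1)
  set G := {p : Ω × ℝ | Y p.1 ≤ p.2}.indicator fun p => F' p.2
  have hS : MeasurableSet S := measurableSet_le hY measurable_const
  have hF' : IntegrableOn F' (Icc 0 1) :=
    integrableOn_derivWithin_Icc_of_contDiffOn_Icc hF zero_lt_one
  have hG : Integrable G ((μ.restrict S).prod (volume.restrict (Icc 0 1))) :=
    integrable_indicator_le_prod hY hF'
  have hFTC : ∀ ω ∈ S, F (Y ω) = F 1 - ∫ s in Icc 0 1, G (ω, s) := fun ω hω => by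
    have h := intervalIntegral.integral_derivWithin_Icc_of_contDiffOn_Icc_of_subset hF (hY0 ω)
      hω le_rfl
    rw [intervalIntegral.integral_of_le hω, ← integral_Icc_eq_integral_Ioc,
      setIntegral_Icc_eq_setIntegral_Icc_indicator_Ici (hY0 ω)] at h
    change F (Y ω) = F 1 - ∫ s in Icc 0 1, (Ici (Y ω)).indicator F' s
    rw [h, sub_sub_cancel]
  have hslice : ∀ s ∈ Icc (0 : ℝ) 1, ∫ ω in S, G (ω, s) ∂μ = F' s * μ.real {ω | Y ω ≤ s} :=
    fun s hs => by
      have hsub : {ω | Y ω ≤ s} ⊆ S := fun ω hω => le_trans hω hs.2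
      have hmeas : MeasurableSet {ω | Y ω ≤ s} := measurableSet_le hY measurable_const
      change ∫ ω in S, {ω | Y ω ≤ s}.indicator (fun _ => F' s) ω ∂μ = _
      rw [integral_indicator_const _ hmeas, measureReal_restrict_apply hmeas,
        inter_eq_left.mpr hsub, smul_eq_mul, mul_comm]
  calc ∫ ω in S, F (Y ω) ∂μ = ∫ ω in S, (F 1 - ∫ s in Icc 0 1, G (ω, s)) ∂μ :=
        setIntegral_congr_fun hS hFTC
    _ = F 1 * μ.real S - ∫ ω in S, (∫ s in Icc 0 1, G (ω, s)) ∂μ := by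
        rw [integral_sub (integrable_const _) hG.integral_prod_left, setIntegral_const,
          smul_eq_mul, mul_comm]
    _ = F 1 * μ.real S - ∫ s in Icc 0 1, ∫ ω in S, G (ω, s) ∂μ := by
        rw [integral_integral_swap (f := fun ω s => G (ω, s)) hG]
    _ = _ := by rw [setIntegral_congr_fun measurableSet_Icc hslice]

end LayerCake

theorem tendsto_setIntegral_mul_div_of_monotone {φ τ g : ℝ → ℝ} (hφ : Monotone φ)
    (hφ0 : ∀ h, 0 ≤ φ h)
    (hτ : ∀ s ∈ Icc (0 : ℝ) 1, Tendsto (fun h => φ (h * s) / φ h) (𝓝[>] 0) (𝓝 (τ s)))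
    (hg : IntegrableOn g (Icc 0 1)) :
    Tendsto (fun h => ∫ s in Icc 0 1, g s * (φ (h * s) / φ h)) (𝓝[>] 0)
      (𝓝 (∫ s in Icc 0 1, g s * τ s)) := by
  refine tendsto_integral_filter_of_dominated_convergence (fun s => ‖g s‖)
    (Eventually.of_forall fun h => ?_) ?_ hg.norm ?_
  · exact hg.aestronglyMeasurable.mul
      ((hφ.measurable.comp (measurable_const_mul h)).div_const _).aestronglyMeasurable
  · filter_upwards [self_mem_nhdsWithin] with h (hh : 0 < h)
    rw [ae_restrict_iff' measurableSet_Icc]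
    refine Eventually.of_forall fun s hs => ?_
    have hratio : ‖φ (h * s) / φ h‖ ≤ 1 := by
      rw [Real.norm_of_nonneg (div_nonneg (hφ0 _) (hφ0 _))]
      exact div_le_one_of_le₀ (hφ (mul_le_of_le_one_right hh.le hs.2)) (hφ0 h)
    rw [norm_mul]
    exact mul_le_of_le_one_right (norm_nonneg _) hratio
  · rw [ae_restrict_iff' measurableSet_Icc]
    exact Eventually.of_forall fun s hs => tendsto_const_nhds.mul (hτ s hs)

theorem tendsto_setIntegral_comp_div_div_measureReal {Ω : Type*} [MeasurableSpace Ω]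
    {μ : Measure Ω} [IsFiniteMeasure μ] {D : Ω → ℝ} (hD : Measurable D) (hD0 : ∀ ω, 0 ≤ D ω)
    (hpos : ∀ h > (0 : ℝ), 0 < μ.real {ω | D ω ≤ h}) {τ : ℝ → ℝ}
    (hτ : ∀ s ∈ Icc (0 : ℝ) 1, Tendsto (fun h => μ.real {ω | D ω ≤ h * s} / μ.real {ω | D ω ≤ h})
      (𝓝[>] 0) (𝓝 (τ s)))
    {F : ℝ → ℝ} (hF : ContDiffOn ℝ 1 F (Icc 0 1)) :
    Tendsto (fun h => (∫ ω in {ω | D ω ≤ h}, F (D ω / h) ∂μ) / μ.real {ω | D ω ≤ h}) (𝓝[>] 0)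
      (𝓝 (F 1 - ∫ s in (0 : ℝ)..1, derivWithin F (Icc 0 1) s * τ s)) := by
  set φ := fun h => μ.real {ω | D ω ≤ h}
  set F' := derivWithin F (Icc 0 1)
  have hφ : Monotone φ := fun a b hab => measureReal_mono fun ω hω => le_trans hω hab
  have hF' : IntegrableOn F' (Icc 0 1) :=
    integrableOn_derivWithin_Icc_of_contDiffOn_Icc hF zero_lt_one
  rw [intervalIntegral.integral_of_le zero_le_one, ← integral_Icc_eq_integral_Ioc]
  refine (tendsto_const_nhds.sub
    (tendsto_setIntegral_mul_div_of_monotone hφ (fun _ => measureReal_nonneg) hτ hF')).congr' ?_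
  filter_upwards [self_mem_nhdsWithin] with h (hh : 0 < h)
  have hset : ∀ s, {ω | D ω / h ≤ s} = {ω | D ω ≤ h * s} := fun s => by
    ext ω; rw [mem_ofPred_eq, mem_ofPred_eq, div_le_iff₀ hh, mul_comm]
  have hlayer := setIntegral_le_one_eq_sub_setIntegral_derivWithin_mul (μ := μ)
    (hD.div_const h) (fun ω => div_nonneg (hD0 ω) hh.le) hF
  simp only [hset, mul_one] at hlayer
  rw [hlayer, sub_div, mul_div_cancel_right₀ _ (hpos h hh).ne', ← integral_div]
  simp only [φ, F', mul_div_assoc]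

theorem stmt_7 {H : Type*} [PseudoMetricSpace H]
    {Ω : Type*} [MeasurableSpace Ω] (P : Measure Ω) [IsProbabilityMeasure P]
    (x₀ : H) (X : Ω → H) (hd : Measurable fun ω => dist (X ω) x₀)
    (φ : ℝ → ℝ) (hφdef : ∀ h, φ h = (P {ω | dist (X ω) x₀ ≤ h}).toReal)
    (hφpos : ∀ h > (0 : ℝ), 0 < φ h)
    (τ : ℝ → ℝ)
    (hτ : ∀ s ∈ Set.Icc (0 : ℝ) 1,
      Tendsto (fun h => φ (h * s) / φ h) (nhdsWithin 0 (Set.Ioi 0)) (nhds (τ s)))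
    (K : ℝ → ℝ) (hK : ContDiffOn ℝ 1 K (Set.Icc 0 1)) :
    Tendsto
      (fun h => (∫ ω in {ω | dist (X ω) x₀ ≤ h}, K (dist (X ω) x₀ / h) ∂P) / φ h)
      (nhdsWithin 0 (Set.Ioi 0))
      (nhds (K 1 - ∫ s in (0 : ℝ)..1, derivWithin K (Set.Icc 0 1) s * τ s)) ∧
    Tendsto
      (fun h => (∫ ω in {ω | dist (X ω) x₀ ≤ h}, (K (dist (X ω) x₀ / h)) ^ 2 ∂P) / φ h)
      (nhdsWithin 0 (Set.Ioi 0))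
      (nhds ((K 1) ^ 2 -
        ∫ s in (0 : ℝ)..1, derivWithin (fun t => (K t) ^ 2) (Set.Icc 0 1) s * τ s)) ∧
    Tendsto
      (fun h =>
        (∫ ω in {ω | dist (X ω) x₀ ≤ h},
          (dist (X ω) x₀ / h) * K (dist (X ω) x₀ / h) ∂P) / φ h)
      (nhdsWithin 0 (Set.Ioi 0))
      (nhds (K 1 -
        ∫ s in (0 : ℝ)..1, derivWithin (fun t => t * K t) (Set.Icc 0 1) s * τ s)) := by
  obtain rfl : φ = fun h => P.real {ω | dist (X ω) x₀ ≤ h} := funext hφdef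
  have key := fun F (hF : ContDiffOn ℝ 1 F (Icc 0 1)) =>
    tendsto_setIntegral_comp_div_div_measureReal hd (fun _ => dist_nonneg) hφpos hτ hF
  exact ⟨key K hK, key _ (hK.pow 2), by simpa using key _ (contDiffOn_id.mul hK)⟩
end

section
/- Let (H, d) be a pseudometric space, x₀ ∈ H, and let X be a random element of H on a probability space (Ω, F, P) such that d(X, x₀) is measurable. Let ε be a real random variable with E[ε²] < ∞, E[ε | σ(X)] = 0 almost surely, and E[ε² | σ(X)] = σ²(X) almost surely, where σ² : H → [0, ∞) is measurable and continuous at x₀. Let r : H → ℝ be measurable and continuous at x₀, and set Y = r(X) + ε. Let K : [0, ∞) → [0, ∞) be bounded and measurable with K(u) = 0 for u > 1, write K_h = K(d(X, x₀)/h), and assume E[K_h²] > 0 for all sufficiently small h > 0. Then for every fixed μ ∈ ℝ, E[K_h² (Y − μ)²] / E[K_h²] → σ²(x₀) + (r(x₀) − μ)² as h → 0⁺. -/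
/-!
Write `W = K(d(X, x₀)/h)²` and `g = (r - μ)² + σ²`. Since `W` is a bounded function of `X`,
it can be pulled into conditional expectations given `σ(X)`; expanding
`(Y - μ)² = (r(X) - μ)² + 2 (r(X) - μ) ε + ε²`, the cross term vanishes because `E[ε | X] = 0` and
`E[W ε²] = E[W σ²(X)]`, so `E[W (Y - μ)²] = E[W g(X)]` as soon as `r` is bounded on the support
of `W`. The ratio `E[W g(X)] / E[W]` is a `W`-weighted average of `g(X)` over the ball of radius
`h` around `x₀`, hence tends to `g(x₀)` by continuity of `g` at `x₀`.
-/

open MeasureTheory Filter Topology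

theorem integral_mul_condExp_of_bound {Ω : Type*} {m m₀ : MeasurableSpace Ω} {μ : Measure[m₀] Ω}
    [IsFiniteMeasure μ] (hm : m ≤ m₀) {f g : Ω → ℝ} (hf : StronglyMeasurable[m] f)
    (hg : Integrable g μ) (c : ℝ) (hf_bound : ∀ᵐ ω ∂μ, ‖f ω‖ ≤ c) :
    ∫ ω, f ω * μ[g|m] ω ∂μ = ∫ ω, f ω * g ω ∂μ :=
  calc ∫ ω, f ω * μ[g|m] ω ∂μ = ∫ ω, μ[f * g|m] ω ∂μ :=
        integral_congr_ae (condExp_stronglyMeasurable_mul_of_bound hm hf hg c hf_bound).symm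
    _ = ∫ ω, f ω * g ω ∂μ := integral_condExp hm

theorem norm_mul_le_of_ne_zero {α : Type*} {φ s : α → ℝ} {B C : ℝ} (hφB : ∀ x, ‖φ x‖ ≤ B)
    (hsC : ∀ x, φ x ≠ 0 → |s x| ≤ C) (x : α) : ‖φ x * s x‖ ≤ B * |C| := by
  have hB : 0 ≤ B := (norm_nonneg _).trans (hφB x)
  by_cases hφx : φ x = 0
  · rw [hφx, zero_mul, norm_zero]
    positivity
  · rw [norm_mul, Real.norm_eq_abs (s x)]
    exact mul_le_mul (hφB x) ((hsC x hφx).trans (le_abs_self C)) (abs_nonneg _) hB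

section Regression

variable {H Ω : Type*} [MeasurableSpace H] [MeasurableSpace Ω] {P : Measure Ω}
  {X : Ω → H} {φ : H → ℝ} {c : ℝ}

theorem integrable_comp_mul_of_condExp_eq (hX : Measurable X) {q : Ω → ℝ} {v : H → ℝ}
    (hv : P[q|MeasurableSpace.comap X inferInstance] =ᵐ[P] fun ω => v (X ω))
    (hφ : Measurable φ) (hφc : ∀ x, ‖φ x‖ ≤ c) :
    Integrable (fun ω => φ (X ω) * v (X ω)) P :=
  ((integrable_condExp (f := q)).bdd_mul (hφ.comp hX).aestronglyMeasurable
    (ae_of_all _ fun ω => hφc (X ω))).congr (hv.mono fun ω hω => congrArg (φ (X ω) * ·) hω)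

theorem integral_comp_mul_eq_of_condExp_eq [IsFiniteMeasure P] (hX : Measurable X) {q : Ω → ℝ}
    (hq : Integrable q P) {v : H → ℝ} (hv : P[q|MeasurableSpace.comap X inferInstance] =ᵐ[P] fun ω => v (X ω))
    (hφ : Measurable φ) (hφc : ∀ x, ‖φ x‖ ≤ c) :
    ∫ ω, φ (X ω) * q ω ∂P = ∫ ω, φ (X ω) * v (X ω) ∂P := by
  have hφX : StronglyMeasurable[MeasurableSpace.comap X inferInstance] fun ω => φ (X ω) :=
    (hφ.comp (comap_measurable X)).stronglyMeasurable
  rw [← integral_mul_condExp_of_bound hX.comap_le hφX hq c (ae_of_all _ fun ω => hφc (X ω))]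
  exact integral_congr_ae (hv.mono fun ω hω => congrArg (φ (X ω) * ·) hω)

theorem integral_comp_mul_add_sq [IsFiniteMeasure P] {ε : Ω → ℝ} {σ2 s : H → ℝ} {B C : ℝ}
    (hX : Measurable X) (hεmeas : AEStronglyMeasurable ε P) (hε2 : Integrable (fun ω => ε ω ^ 2) P)
    (hcond : P[ε|MeasurableSpace.comap X inferInstance] =ᵐ[P] 0)
    (hcond2 : P[(fun ω => ε ω ^ 2)|MeasurableSpace.comap X inferInstance]
      =ᵐ[P] fun ω => σ2 (X ω))
    (hφ : Measurable φ) (hs : Measurable s) (hφB : ∀ x, ‖φ x‖ ≤ B)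
    (hsC : ∀ x, φ x ≠ 0 → |s x| ≤ C) :
    ∫ ω, φ (X ω) * (s (X ω) + ε ω) ^ 2 ∂P = ∫ ω, φ (X ω) * (s (X ω) ^ 2 + σ2 (X ω)) ∂P := by
  have hε : Integrable ε P :=
    ((memLp_two_iff_integrable_sq hεmeas).2 hε2).integrable one_le_two
  have hs2C : ∀ x, φ x ≠ 0 → |s x ^ 2| ≤ C ^ 2 := fun x hx => by
    rw [abs_pow]
    exact pow_le_pow_left₀ (abs_nonneg _) (hsC x hx) 2
  have hint_s2 : Integrable (fun ω => φ (X ω) * s (X ω) ^ 2) P :=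
    .of_bound ((hφ.mul (hs.pow_const 2)).comp hX).aestronglyMeasurable _
      (ae_of_all _ fun ω => norm_mul_le_of_ne_zero hφB hs2C (X ω))
  have hint_cross : Integrable (fun ω => φ (X ω) * s (X ω) * ε ω) P :=
    hε.bdd_mul ((hφ.mul hs).comp hX).aestronglyMeasurable
      (ae_of_all _ fun ω => norm_mul_le_of_ne_zero hφB hsC (X ω))
  have hint_ε2 : Integrable (fun ω => φ (X ω) * ε ω ^ 2) P :=
    hε2.bdd_mul (hφ.comp hX).aestronglyMeasurable (ae_of_all _ fun ω => hφB (X ω))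
  have hint_σ2 : Integrable (fun ω => φ (X ω) * σ2 (X ω)) P :=
    integrable_comp_mul_of_condExp_eq hX hcond2 hφ hφB
  have hcross : ∫ ω, φ (X ω) * s (X ω) * ε ω ∂P = 0 :=
    (integral_comp_mul_eq_of_condExp_eq (φ := fun x => φ x * s x) (v := fun _ => 0) hX hε hcond
      (hφ.mul hs) (norm_mul_le_of_ne_zero hφB hsC)).trans (by simp)
  have hsq : ∫ ω, φ (X ω) * ε ω ^ 2 ∂P = ∫ ω, φ (X ω) * σ2 (X ω) ∂P :=
    integral_comp_mul_eq_of_condExp_eq hX hε2 hcond2 hφ hφB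
  calc ∫ ω, φ (X ω) * (s (X ω) + ε ω) ^ 2 ∂P
      = ∫ ω, (φ (X ω) * s (X ω) ^ 2 + 2 * (φ (X ω) * s (X ω) * ε ω) + φ (X ω) * ε ω ^ 2) ∂P :=
        integral_congr_ae (ae_of_all _ fun ω => by ring)
    _ = ∫ ω, φ (X ω) * s (X ω) ^ 2 ∂P + ∫ ω, φ (X ω) * σ2 (X ω) ∂P := by
        rw [integral_add (by exact hint_s2.add (hint_cross.const_mul 2)) hint_ε2,
          integral_add hint_s2 (hint_cross.const_mul 2), integral_const_mul, hcross, hsq]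
        ring
    _ = ∫ ω, φ (X ω) * (s (X ω) ^ 2 + σ2 (X ω)) ∂P := by
        rw [← integral_add hint_s2 hint_σ2]
        exact integral_congr_ae (ae_of_all _ fun ω => by ring)

end Regression

theorem abs_integral_mul_div_integral_sub_le {α : Type*} [MeasurableSpace α] {μ : Measure α}
    {w f : α → ℝ} {c η : ℝ} (hw : Integrable w μ) (hw0 : ∀ a, 0 ≤ w a)
    (hf : AEStronglyMeasurable f μ) (hfc : ∀ a, w a ≠ 0 → |f a - c| ≤ η)
    (hpos : 0 < ∫ a, w a ∂μ) :
    |(∫ a, w a * f a ∂μ) / ∫ a, w a ∂μ - c| ≤ η := by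
  have hbound : ∀ a, ‖w a * (f a - c)‖ ≤ η * w a := fun a => by
    by_cases hwa : w a = 0
    · simp [hwa]
    · rw [norm_mul, Real.norm_of_nonneg (hw0 a), Real.norm_eq_abs, mul_comm]
      exact mul_le_mul_of_nonneg_right (hfc a hwa) (hw0 a)
  have hint : Integrable (fun a => w a * (f a - c)) μ :=
    (hw.const_mul η).mono' (hw.aestronglyMeasurable.mul (hf.sub aestronglyMeasurable_const))
      (ae_of_all _ hbound)
  have hsplit : ∫ a, w a * f a ∂μ = ∫ a, w a * (f a - c) ∂μ + c * ∫ a, w a ∂μ := by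
    rw [← integral_const_mul, ← integral_add hint (hw.const_mul c)]
    exact integral_congr_ae (ae_of_all _ fun a => by ring)
  rw [hsplit, add_div, mul_div_assoc, div_self hpos.ne', mul_one, add_sub_cancel_right, abs_div,
    abs_of_pos hpos, div_le_iff₀ hpos, ← integral_const_mul, ← Real.norm_eq_abs]
  exact norm_integral_le_of_norm_le (hw.const_mul η) (ae_of_all _ hbound)

theorem dist_le_of_apply_div_ne_zero {H : Type*} [PseudoMetricSpace H] {L : ℝ → ℝ}
    (hL : ∀ u, 1 < u → L u = 0) {x y : H} {h : ℝ} (hh : 0 < h) (hx : L (dist x y / h) ≠ 0) :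
    dist x y ≤ h := by
  by_contra hlt
  exact hx (hL _ ((one_lt_div hh).2 (not_le.1 hlt)))

theorem measurable_comp_dist_div {H : Type*} [PseudoMetricSpace H] [MeasurableSpace H]
    [BorelSpace H] {L : ℝ → ℝ} (hL : Measurable L) (x₀ : H) (h : ℝ) :
    Measurable fun x => L (dist x x₀ / h) :=
  hL.comp ((continuous_id.dist continuous_const).measurable.div_const h)

theorem tendsto_integral_kernel_mul_div_integral_kernel {H Ω : Type*} [PseudoMetricSpace H]
    [MeasurableSpace H] [BorelSpace H] [MeasurableSpace Ω] {P : Measure Ω} [IsFiniteMeasure P]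
    {X : Ω → H} (hX : Measurable X) {x₀ : H} {L : ℝ → ℝ} (hLmeas : Measurable L)
    (hLnn : ∀ u, 0 ≤ u → 0 ≤ L u) (hLbdd : ∃ B, ∀ u, 0 ≤ u → L u ≤ B)
    (hLsupp : ∀ u, 1 < u → L u = 0) {g : H → ℝ} (hg : Measurable g) (hgx₀ : ContinuousAt g x₀)
    (hpos : ∀ᶠ h in 𝓝[>] 0, 0 < ∫ ω, L (dist (X ω) x₀ / h) ∂P) :
    Tendsto (fun h => (∫ ω, L (dist (X ω) x₀ / h) * g (X ω) ∂P) / ∫ ω, L (dist (X ω) x₀ / h) ∂P)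
      (𝓝[>] 0) (𝓝 (g x₀)) := by
  obtain ⟨B, hB⟩ := hLbdd
  refine Metric.tendsto_nhds.2 fun η hη => ?_
  obtain ⟨δ, hδ, hgδ⟩ := Metric.continuousAt_iff.1 hgx₀ (η / 2) (half_pos hη)
  filter_upwards [hpos, Ioo_mem_nhdsGT hδ] with h hposh ⟨hh, hhδ⟩
  have hw0 : ∀ ω, 0 ≤ L (dist (X ω) x₀ / h) := fun ω => hLnn _ (by positivity)
  have hw : Integrable (fun ω => L (dist (X ω) x₀ / h)) P :=
    .of_bound ((measurable_comp_dist_div hLmeas x₀ h).comp hX).aestronglyMeasurable B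
      (ae_of_all _ fun ω => (Real.norm_of_nonneg (hw0 ω)).trans_le (hB _ (by positivity)))
  refine (abs_integral_mul_div_integral_sub_le hw hw0 (hg.comp hX).aestronglyMeasurable
    (fun ω hω => ?_) hposh).trans_lt (half_lt_self hη)
  exact (hgδ ((dist_le_of_apply_div_ne_zero hLsupp hh hω).trans_lt hhδ)).le

theorem stmt_11_general {H : Type*} [PseudoMetricSpace H] [MeasurableSpace H] [BorelSpace H]
    {Ω : Type*} [MeasurableSpace Ω] (P : Measure Ω) [IsProbabilityMeasure P]
    (x₀ : H) (X : Ω → H) (hX : Measurable X)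
    (ε : Ω → ℝ) (hεmeas : Measurable ε)
    (hε2 : Integrable (fun ω => (ε ω) ^ 2) P)
    (hcond : P[ε|MeasurableSpace.comap X inferInstance] =ᵐ[P] 0)
    (σ2 : H → ℝ) (hσ2meas : Measurable σ2)
    (hσ2cont : ContinuousAt σ2 x₀)
    (hcond2 : P[(fun ω => (ε ω) ^ 2)|MeasurableSpace.comap X inferInstance]
      =ᵐ[P] fun ω => σ2 (X ω))
    (r : H → ℝ) (hrmeas : Measurable r) (hrcont : ContinuousAt r x₀)
    (Y : Ω → ℝ) (hY : ∀ ω, Y ω = r (X ω) + ε ω)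
    (K : ℝ → ℝ) (hKmeas : Measurable K) (hKnn : ∀ u, 0 ≤ u → 0 ≤ K u)
    (hKbdd : ∃ B, ∀ u, 0 ≤ u → K u ≤ B) (hKsupp : ∀ u, 1 < u → K u = 0)
    (hpos : ∃ h₀ > (0 : ℝ), ∀ h ∈ Set.Ioo (0 : ℝ) h₀,
      0 < ∫ ω, (K (dist (X ω) x₀ / h)) ^ 2 ∂P)
    (μ : ℝ) :
    Tendsto
      (fun h => (∫ ω, (K (dist (X ω) x₀ / h)) ^ 2 * (Y ω - μ) ^ 2 ∂P) /
        (∫ ω, (K (dist (X ω) x₀ / h)) ^ 2 ∂P))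
      (nhdsWithin 0 (Set.Ioi 0)) (nhds (σ2 x₀ + (r x₀ - μ) ^ 2)) := by
  obtain ⟨B, hB⟩ := hKbdd
  obtain ⟨h₀, hh₀, hpos⟩ := hpos
  have hK2bdd : ∀ u, 0 ≤ u → K u ^ 2 ≤ B ^ 2 := fun u hu =>
    pow_le_pow_left₀ (hKnn u hu) (hB u hu) 2
  have hK2supp : ∀ u, 1 < u → K u ^ 2 = 0 := fun u hu => by rw [hKsupp u hu, zero_pow two_ne_zero]
  obtain ⟨δ, hδ, hrδ⟩ := Metric.continuousAt_iff.1 hrcont 1 one_pos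
  have hmoment : ∀ᶠ h in 𝓝[>] 0,
      ∫ ω, K (dist (X ω) x₀ / h) ^ 2 * ((r (X ω) - μ) ^ 2 + σ2 (X ω)) ∂P
        = ∫ ω, K (dist (X ω) x₀ / h) ^ 2 * (Y ω - μ) ^ 2 ∂P := by
    filter_upwards [Ioo_mem_nhdsGT hδ] with h ⟨hh, hhδ⟩
    simp_rw [hY, add_sub_right_comm]
    refine (integral_comp_mul_add_sq (φ := fun x => K (dist x x₀ / h) ^ 2) (s := fun x => r x - μ)
      (B := B ^ 2) (C := |r x₀ - μ| + 1) hX hεmeas.aestronglyMeasurable hε2 hcond hcond2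
      ((measurable_comp_dist_div hKmeas x₀ h).pow_const 2) (hrmeas.sub measurable_const)
      (fun x => ?_) (fun x hx => ?_)).symm
    · rw [Real.norm_of_nonneg (sq_nonneg _)]
      exact hK2bdd _ (by positivity)
    · have hrx := hrδ ((dist_le_of_apply_div_ne_zero hK2supp hh hx).trans_lt hhδ)
      rw [Real.dist_eq] at hrx
      linarith [abs_sub_le (r x) (r x₀) μ]
  rw [add_comm]
  refine (tendsto_integral_kernel_mul_div_integral_kernel (P := P)
    (g := fun x => (r x - μ) ^ 2 + σ2 x) hX (hKmeas.pow_const 2)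
    (fun u _ => sq_nonneg (K u)) ⟨B ^ 2, hK2bdd⟩ hK2supp
    (((hrmeas.sub measurable_const).pow_const 2).add hσ2meas)
    (((hrcont.sub continuousAt_const).pow 2).add hσ2cont)
    (eventually_of_mem (Ioo_mem_nhdsGT hh₀) hpos)).congr' ?_
  filter_upwards [hmoment] with h hh
  rw [hh]

theorem stmt_11 {H : Type*} [PseudoMetricSpace H] [MeasurableSpace H] [BorelSpace H]
    {Ω : Type*} [MeasurableSpace Ω] (P : Measure Ω) [IsProbabilityMeasure P]
    (x₀ : H) (X : Ω → H) (hX : Measurable X)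
    (ε : Ω → ℝ) (hεmeas : Measurable ε)
    (hε2 : Integrable (fun ω => (ε ω) ^ 2) P)
    (hcond : P[ε|MeasurableSpace.comap X inferInstance] =ᵐ[P] 0)
    (σ2 : H → ℝ) (hσ2meas : Measurable σ2) (hσ2nn : ∀ x, 0 ≤ σ2 x)
    (hσ2cont : ContinuousAt σ2 x₀)
    (hcond2 : P[(fun ω => (ε ω) ^ 2)|MeasurableSpace.comap X inferInstance]
      =ᵐ[P] fun ω => σ2 (X ω))
    (r : H → ℝ) (hrmeas : Measurable r) (hrcont : ContinuousAt r x₀)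
    (Y : Ω → ℝ) (hY : ∀ ω, Y ω = r (X ω) + ε ω)
    (K : ℝ → ℝ) (hKmeas : Measurable K) (hKnn : ∀ u, 0 ≤ u → 0 ≤ K u)
    (hKbdd : ∃ B, ∀ u, 0 ≤ u → K u ≤ B) (hKsupp : ∀ u, 1 < u → K u = 0)
    (hpos : ∃ h₀ > (0 : ℝ), ∀ h ∈ Set.Ioo (0 : ℝ) h₀,
      0 < ∫ ω, (K (dist (X ω) x₀ / h)) ^ 2 ∂P)
    (μ : ℝ) :
    Tendsto
      (fun h => (∫ ω, (K (dist (X ω) x₀ / h)) ^ 2 * (Y ω - μ) ^ 2 ∂P) /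
        (∫ ω, (K (dist (X ω) x₀ / h)) ^ 2 ∂P))
      (nhdsWithin 0 (Set.Ioi 0)) (nhds (σ2 x₀ + (r x₀ - μ) ^ 2)) :=
  stmt_11_general P x₀ X hX ε hεmeas hε2 hcond σ2 hσ2meas hσ2cont hcond2 r hrmeas hrcont Y hY K
    hKmeas hKnn hKbdd hKsupp hpos μ
end
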